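/- arXiv:1312.3055 — 7 statements merged into one kernel-verified Lean document; each statement's English description precedes it below -/
import Mathlib

section
/- For every integer m ≥ 2, the series Σ_{n≥0} φ_{n,m} q^n converges for every real number q with 0 ≤ q ≤ 2/27, and diverges for every real number q > 2/27. -/
/-!
With `k = m - 2`, the ratio of consecutive coefficients is the rational function
`φ_{n+1,m} / φ_{n,m} = 2 (2k+3n+1)(2k+3n+2)(2k+3n+3) / ((n+1)(2k+2n+3)(2k+2n+4))`,
which tends to `27/2`, so the ratio test gives divergence for `q > 2/27`. At `q = 2/27` the ratio
of consecutive terms is `1 - 5/(2n) + O(1/n²)`, eventually below `((n+1)/(n+2))² = 1 - 2/n + O(1/n²)`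
(explicitly, from `n ≥ k² + 3k + 3` on). Hence `(n+1)² φ_{n,m} (2/27)ⁿ` is eventually decreasing,
the terms are `O(1/n²)` and the series converges; smaller `q` follow by comparison.
-/

/-- `phi n m` is the number of rooted triangulations without self-loops of a disc with
`m` boundary vertices and `n` internal vertices (as a real number). -/
noncomputable def phi (n m : ℕ) : ℝ :=
  ((2:ℝ) ^ (n + 1) * (Nat.factorial (2 * (m - 2) + 1) : ℝ) *
      (Nat.factorial (2 * (m - 2) + 3 * n) : ℝ)) /
    (((Nat.factorial (m - 2) : ℝ)) ^ 2 * (Nat.factorial n : ℝ) *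
      (Nat.factorial (2 * (m - 2) + 2 * n + 2) : ℝ))

open Filter Topology

lemma summable_of_eventually_mul_sq_le {a : ℕ → ℝ} (ha : ∀ n, 0 ≤ a n)
    (h : ∀ᶠ n in atTop, a (n + 1) * ((n : ℝ) + 2) ^ 2 ≤ a n * ((n : ℝ) + 1) ^ 2) :
    Summable a := by
  obtain ⟨N, hN⟩ := eventually_atTop.1 h
  set C := a N * ((N : ℝ) + 1) ^ 2
  have hbound : ∀ n, N ≤ n → a n * ((n : ℝ) + 1) ^ 2 ≤ C := by
    intro n hn
    induction n, hn using Nat.le_induction with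
    | base => rfl
    | succ n hn ih =>
      calc a (n + 1) * (((n + 1 : ℕ) : ℝ) + 1) ^ 2
          = a (n + 1) * ((n : ℝ) + 2) ^ 2 := by push_cast; ring
        _ ≤ C := (hN n hn).trans ih
  have hsq : Summable (fun n : ℕ => 1 / ((n : ℝ) + 1) ^ 2) := by
    simpa using (summable_nat_add_iff 1).2 (Real.summable_one_div_nat_pow.2 one_lt_two)
  refine (hsq.mul_left C).of_norm_bounded_eventually_nat ?_
  filter_upwards [eventually_ge_atTop N] with n hn
  rw [Real.norm_of_nonneg (ha n), mul_one_div, le_div_iff₀ (by positivity)]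
  exact hbound n hn

lemma phi_pos (n m : ℕ) : 0 < phi n m := by
  unfold phi
  positivity

noncomputable def phiRatio (k n : ℕ) : ℝ :=
  2 * (2 * k + 3 * n + 1) * (2 * k + 3 * n + 2) * (2 * k + 3 * n + 3) /
    ((n + 1) * (2 * k + 2 * n + 3) * (2 * k + 2 * n + 4))

lemma phi_succ (n m : ℕ) : phi (n + 1) m = phi n m * phiRatio (m - 2) n := by
  have h3 : 2 * (m - 2) + 3 * (n + 1) = 2 * (m - 2) + 3 * n + 1 + 1 + 1 := by ring
  have h2 : 2 * (m - 2) + 2 * (n + 1) + 2 = 2 * (m - 2) + 2 * n + 2 + 1 + 1 := by ring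
  unfold phi phiRatio
  rw [h3, h2]
  simp only [Nat.factorial_succ]
  push_cast
  field_simp
  ring

lemma phi_mul_pow_succ (n m : ℕ) (q : ℝ) :
    phi (n + 1) m * q ^ (n + 1) = phi n m * q ^ n * (q * phiRatio (m - 2) n) := by
  rw [phi_succ, pow_succ]
  ring

lemma tendsto_phiRatio (k : ℕ) : Tendsto (phiRatio k) atTop (𝓝 (27 / 2)) := by
  have hfactor : ∀ a b : ℝ, ∀ {d : ℝ}, d ≠ 0 →
      Tendsto (fun n : ℕ => (a + 3 * n) / (b + d * n)) atTop (𝓝 (3 / d)) :=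
    fun a b _ hd => tendsto_add_mul_div_add_mul_atTop_nhds a b 3 hd
  have hprod := (((hfactor (2 * k + 1) 1 one_ne_zero).const_mul 2).mul
    (hfactor (2 * k + 2) (2 * k + 3) two_ne_zero)).mul
    (hfactor (2 * k + 3) (2 * k + 4) two_ne_zero)
  convert hprod using 2 with n
  · unfold phiRatio
    field_simp
    ring
  · norm_num

lemma phiRatio_mul_sq_le {k n : ℕ} (hn : k ^ 2 + 3 * k + 3 ≤ n) :
    2 / 27 * phiRatio k n * ((n : ℝ) + 2) ^ 2 ≤ ((n : ℝ) + 1) ^ 2 := by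
  obtain ⟨i, rfl⟩ := Nat.exists_eq_add_of_le hn
  unfold phiRatio
  rw [mul_div_assoc', div_mul_eq_mul_div, div_le_iff₀ (by positivity), ← sub_nonneg]
  push_cast
  -- with `n = k² + 3k + 3 + i`, the difference is a polynomial in `k, i` with positive coefficients
  ring_nf
  positivity

lemma summable_phi_mul_pow_two_div_27 (m : ℕ) :
    Summable (fun n : ℕ => phi n m * (2 / 27 : ℝ) ^ n) := by
  refine summable_of_eventually_mul_sq_le (fun n => by positivity [phi_pos n m]) ?_
  filter_upwards [eventually_ge_atTop ((m - 2) ^ 2 + 3 * (m - 2) + 3)] with n hn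
  rw [phi_mul_pow_succ, mul_assoc]
  exact mul_le_mul_of_nonneg_left (phiRatio_mul_sq_le hn) (by positivity [phi_pos n m])

lemma not_summable_phi_mul_pow {m : ℕ} {q : ℝ} (hq : 2 / 27 < q) :
    ¬ Summable (fun n : ℕ => phi n m * q ^ n) := by
  have hq0 : 0 < q := by linarith
  refine not_summable_of_ratio_test_tendsto_gt_one (l := q * (27 / 2)) (by linarith) ?_
  refine ((tendsto_phiRatio (m - 2)).const_mul q).congr fun n => ?_
  have hterm : 0 < phi n m * q ^ n := by positivity [phi_pos n m]
  rw [phi_mul_pow_succ, Real.norm_of_nonneg hterm.le,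
    Real.norm_of_nonneg (by unfold phiRatio; positivity), mul_div_cancel_left₀ _ hterm.ne']

theorem partition_function_radius_of_convergence_general (m : ℕ) :
    (∀ q : ℝ, 0 ≤ q → q ≤ 2 / 27 → Summable (fun n : ℕ => phi n m * q ^ n)) ∧
      (∀ q : ℝ, 2 / 27 < q → ¬ Summable (fun n : ℕ => phi n m * q ^ n)) := by
  refine ⟨fun q hq0 hq => ?_, fun q hq => not_summable_phi_mul_pow hq⟩
  refine (summable_phi_mul_pow_two_div_27 m).of_nonneg_of_le
    (fun n => by positivity [phi_pos n m]) (fun n => ?_)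
  exact mul_le_mul_of_nonneg_left (pow_le_pow_left₀ hq0 hq n) (phi_pos n m).le

theorem partition_function_radius_of_convergence (m : ℕ) (hm : 2 ≤ m) :
    (∀ q : ℝ, 0 ≤ q → q ≤ 2 / 27 → Summable (fun n : ℕ => phi n m * q ^ n)) ∧
      (∀ q : ℝ, 2 / 27 < q → ¬ Summable (fun n : ℕ => phi n m * q ^ n)) :=
  partition_function_radius_of_convergence_general m
end

section
/- Let α ∈ (2/3, 1). Then for every integer i ≥ 1, Σ_{k≥0} p_{i,k} = p_i, where p_{i,k} = 2·φ_{k,i+1}·α^{i+2k}·((1−α)/2)^{i+k} and p_i = (2/4^i)·((2i−2)!/((i−1)!·(i+1)!))·(2/α − 2)^i·((3α−2)i + 1); in particular the series on the left converges. -/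
open Finset Nat

/-- The Raney numbers `R(x, k) = x / (x + 3k) * C(x + 3k, k)` (number of forests of `x` ternary
trees with `k` internal nodes), with `R(0, k) = δ_{k,0}`. -/
noncomputable def raney : ℕ → ℕ → ℝ
  | 0, 0 => 1
  | 0, _ + 1 => 0
  | s + 1, k => (s + 1) * (s + 3 * k)! / (k ! * (s + 2 * k + 1)!)

lemma raney_succ (s k : ℕ) :
    raney (s + 1) k = (s + 1) * (s + 3 * k)! / (k ! * (s + 2 * k + 1)!) := rfl

lemma raney_zero_succ (k : ℕ) : raney 0 (k + 1) = 0 := rfl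

@[simp] lemma raney_zero_right (x : ℕ) : raney x 0 = 1 := by
  rcases x with _ | s
  · rfl
  · rw [raney_succ, mul_zero, add_zero, mul_zero, add_zero, factorial_succ]
    push_cast [factorial_zero]
    field_simp

lemma raney_nonneg (x k : ℕ) : 0 ≤ raney x k := by
  rcases x with _ | s
  · rcases k <;> simp [raney]
  · rw [raney_succ]
    positivity

lemma raney_succ_succ (s k : ℕ) :
    raney (s + 1) (k + 1) = raney s (k + 1) + raney (s + 3) k := by
  rcases s with _ | s
  · rw [raney_zero_succ, zero_add, raney_succ, raney_succ,
      show 0 + 3 * (k + 1) = 3 * k + 2 + 1 by ring,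
      show 0 + 2 * (k + 1) + 1 = 2 * k + 2 + 1 by ring,
      show 2 + 3 * k = 3 * k + 2 by ring, show 2 + 2 * k + 1 = 2 * k + 2 + 1 by ring]
    push_cast [factorial_succ]
    field_simp
    ring
  · simp only [raney_succ]
    rw [show s + 1 + 3 * (k + 1) = s + 3 * k + 3 + 1 by ring,
      show s + 1 + 2 * (k + 1) + 1 = s + 2 * k + 3 + 1 by ring,
      show s + 3 * (k + 1) = s + 3 * k + 3 by ring,
      show s + 2 * (k + 1) + 1 = s + 2 * k + 3 by ring,
      show s + 3 + 3 * k = s + 3 * k + 3 by ring,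
      show s + 3 + 2 * k + 1 = s + 2 * k + 3 + 1 by ring]
    push_cast [factorial_succ]
    field_simp
    ring

lemma raney_add (x y k : ℕ) :
    raney (x + y) k = ∑ p ∈ antidiagonal k, raney x p.1 * raney y p.2 := by
  induction k generalizing x y with
  | zero => simp
  | succ k ihk =>
    induction y with
    | zero => simp [Finset.Nat.sum_antidiagonal_succ', raney_zero_succ]
    | succ y ihy =>
      rw [← add_assoc, raney_succ_succ, ihy, add_assoc, ihk x (y + 3),
        Finset.Nat.sum_antidiagonal_succ', Finset.Nat.sum_antidiagonal_succ']
      simp only [raney_succ_succ, mul_add, sum_add_distrib, raney_zero_right]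
      ring

lemma raney_one_succ (k : ℕ) :
    raney 1 (k + 1) =
      (3 * k + 1) * (3 * k + 2) * (3 * k + 3) / ((k + 1) * (2 * k + 2) * (2 * k + 3)) * raney 1 k := by
  simp only [raney_succ, zero_add]
  rw [show 3 * (k + 1) = 3 * k + 1 + 1 + 1 by ring,
    show 2 * (k + 1) + 1 = 2 * k + 1 + 1 + 1 by ring]
  push_cast [factorial_succ]
  field_simp
  ring

lemma raney_one_le_pow (k : ℕ) : raney 1 k ≤ (27 / 4) ^ k := by
  induction k with
  | zero => simp
  | succ k ih =>
    have hratio : (3 * k + 1) * (3 * k + 2) * (3 * k + 3) / ((k + 1) * (2 * k + 2) * (2 * k + 3))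
        ≤ (27 / 4 : ℝ) := by
      rw [div_le_iff₀ (by positivity)]
      nlinarith [k.cast_nonneg (α := ℝ)]
    rw [raney_one_succ, pow_succ, mul_comm _ (27 / 4)]
    exact mul_le_mul hratio ih (raney_nonneg 1 k) (by norm_num)

lemma phi_eq_raney (j k : ℕ) :
    phi k (j + 2) = 2 ^ k * (2 * j + 1)! / (j ! ^ 2 * (j + 2)) *
      (3 / (2 * j + 1) * raney (2 * j + 1) k - 1 / (j + 1) * raney (2 * j + 2) k) := by
  rw [phi, raney_succ, raney_succ, Nat.add_sub_cancel,
    show 2 * j + 1 + 3 * k = 2 * j + 3 * k + 1 by ring,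
    show 2 * j + 1 + 2 * k + 1 = 2 * j + 2 * k + 1 + 1 by ring,
    show 2 * j + 2 * k + 2 = 2 * j + 2 * k + 1 + 1 by ring]
  push_cast [factorial_succ]
  field_simp
  ring

lemma HasSum.sum_antidiagonal_mul {f g : ℕ → ℝ} {a b : ℝ} (hf : HasSum f a) (hg : HasSum g b) :
    HasSum (fun n ↦ ∑ p ∈ antidiagonal n, f p.1 * g p.2) (a * b) := by
  have hf' := hf.summable.norm
  have hg' := hg.summable.norm
  rw [← hf.tsum_eq, ← hg.tsum_eq, tsum_mul_tsum_eq_tsum_sum_antidiagonal_of_summable_norm hf' hg']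
  exact (summable_norm_sum_mul_antidiagonal_of_summable_norm hf' hg').of_norm.hasSum

theorem IsPreconnected.eqOn_zero_of_mul_eq_zero {X : Type*} [TopologicalSpace X] {S : Set X}
    {f g : X → ℝ} (hS : IsPreconnected S) (hf : ContinuousOn f S) (hg : ContinuousOn g S)
    (hfg : ∀ x ∈ S, f x * g x = 0) (hne : ∀ x ∈ S, f x = 0 → g x ≠ 0) {a : X} (ha : a ∈ S)
    (hfa : f a = 0) : ∀ x ∈ S, f x = 0 := by
  have hsub : ∀ x ∈ S, f x - g x ≠ 0 := by
    intro x hx hfg_eq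
    rcases mul_eq_zero.1 (hfg x hx) with h | h
    · exact hne x hx h (by linarith)
    · exact hne x hx (by linarith) h
  -- `f / (f - g)` is `0` where `f` vanishes and `1` where `g` does
  have hmaps : Set.MapsTo (fun x ↦ f x / (f x - g x)) S {0, 1} := by
    intro x hx
    rcases mul_eq_zero.1 (hfg x hx) with h | h
    · simp [h]
    · simp [h, div_self (by simpa [h] using hsub x hx)]
  intro x hx
  have := hS.constant_of_mapsTo (Set.toFinite _).isDiscrete (hf.div (hf.sub hg) hsub) hmaps hx ha
  simpa [hfa, hsub x hx] using this

lemma strictAntiOn_sq_mul_one_sub :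
    StrictAntiOn (fun x : ℝ ↦ x ^ 2 * (1 - x)) (Set.Ici (2 / 3)) := by
  intro a ha b hb hab
  simp only [Set.mem_Ici] at ha hb
  have hb' : 2 / 3 < b := ha.trans_lt hab
  have key : 0 < a ^ 2 + a * b + b ^ 2 - a - b := by nlinarith
  show b ^ 2 * (1 - b) < a ^ 2 * (1 - a)
  nlinarith [mul_pos (sub_pos.2 hab) key]

lemma sq_mul_one_sub_mem_Ico {α : ℝ} (hα : 2 / 3 < α) (hα1 : α ≤ 1) :
    α ^ 2 * (1 - α) ∈ Set.Ico 0 (4 / 27) := by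
  refine ⟨mul_nonneg (sq_nonneg α) (by linarith), ?_⟩
  have h := strictAntiOn_sq_mul_one_sub (by norm_num : (2 / 3 : ℝ) ∈ Set.Ici (2 / 3))
    (Set.mem_Ici.2 hα.le) hα
  norm_num at h
  linarith

noncomputable def ternaryGF (t : ℝ) : ℝ := ∑' k, raney 1 k * t ^ k

section ternaryGF

variable {t : ℝ}

lemma summable_raney_one_mul_pow (ht0 : 0 ≤ t) (ht : t < 4 / 27) :
    Summable (fun k ↦ raney 1 k * t ^ k) := by
  have hgeom := summable_geometric_of_lt_one (by positivity) (by linarith : 27 / 4 * t < 1)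
  refine hgeom.of_nonneg_of_le (fun k ↦ by have := raney_nonneg 1 k; positivity) (fun k ↦ ?_)
  rw [mul_pow]
  exact mul_le_mul_of_nonneg_right (raney_one_le_pow k) (by positivity)

lemma hasSum_raney_mul_pow (ht0 : 0 ≤ t) (ht : t < 4 / 27) (r : ℕ) :
    HasSum (fun k ↦ raney r k * t ^ k) (ternaryGF t ^ r) := by
  induction r with
  | zero =>
    simpa using hasSum_single (f := fun k ↦ raney 0 k * t ^ k) 0
      (fun k hk ↦ by obtain ⟨k, rfl⟩ := exists_eq_succ_of_ne_zero hk; simp [raney_zero_succ])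
  | succ r ih =>
    convert ih.sum_antidiagonal_mul (summable_raney_one_mul_pow ht0 ht).hasSum using 1
    · ext n
      rw [raney_add, sum_mul]
      refine sum_congr rfl fun p hp ↦ ?_
      rw [← mem_antidiagonal.1 hp, pow_add]
      ring
    · rw [pow_succ, ternaryGF]

lemma ternaryGF_eq_one_add_mul_pow_three (ht0 : 0 ≤ t) (ht : t < 4 / 27) :
    ternaryGF t = 1 + t * ternaryGF t ^ 3 := by
  have hshift : HasSum (fun k ↦ raney 1 (k + 1) * t ^ (k + 1)) (t * ternaryGF t ^ 3) := by
    have hterm : (fun k ↦ raney 1 (k + 1) * t ^ (k + 1)) = fun k ↦ t * (raney 3 k * t ^ k) := by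
      ext k
      rw [raney_succ_succ, raney_zero_succ, zero_add, pow_succ]
      ring
    rw [hterm]
    exact (hasSum_raney_mul_pow ht0 ht 3).mul_left t
  have hcubic : HasSum (fun k ↦ raney 1 k * t ^ k) (1 + t * ternaryGF t ^ 3) :=
    (hasSum_nat_add_iff' 1).1 (by simpa using hshift)
  exact (summable_raney_one_mul_pow ht0 ht).hasSum.unique hcubic

end ternaryGF

lemma ternaryGF_zero : ternaryGF 0 = 1 := by
  rw [ternaryGF, tsum_eq_single 0 fun k hk ↦ by simp [hk]]
  simp

lemma continuousOn_ternaryGF {c : ℝ} (hc0 : 0 ≤ c) (hc : c < 4 / 27) :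
    ContinuousOn ternaryGF (Set.Icc 0 c) := by
  refine continuousOn_tsum (fun k ↦ by fun_prop) (summable_raney_one_mul_pow hc0 hc) ?_
  rintro k x ⟨hx0, hxc⟩
  rw [Real.norm_of_nonneg (mul_nonneg (raney_nonneg 1 k) (pow_nonneg hx0 k))]
  exact mul_le_mul_of_nonneg_left (pow_le_pow_left₀ hx0 hxc k) (raney_nonneg 1 k)

/-- At `t = α²(1 - α)`, the cubic `B = 1 + t B³` has the root `1/α` and the roots of
`α(1 - α)B² + (1 - α)B = 1`; the two families meet only at `α = 2/3`, so by continuity the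
choice `B = 1/α`, made at `α = 1`, persists on `(2/3, 1]`. -/
theorem ternaryGF_sq_mul_one_sub {α : ℝ} (hα : 2 / 3 < α) (hα1 : α ≤ 1) :
    ternaryGF (α ^ 2 * (1 - α)) = α⁻¹ := by
  set W : ℝ → ℝ := fun β ↦ ternaryGF (β ^ 2 * (1 - β))
  obtain ⟨hα0, hα4⟩ := sq_mul_one_sub_mem_Ico hα hα1
  have hmaps : Set.MapsTo (fun β : ℝ ↦ β ^ 2 * (1 - β)) (Set.Icc α 1)
      (Set.Icc 0 (α ^ 2 * (1 - α))) := by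
    rintro β ⟨hαβ, hβ1⟩
    exact ⟨mul_nonneg (sq_nonneg β) (by linarith), strictAntiOn_sq_mul_one_sub.antitoneOn
      (Set.mem_Ici.2 hα.le) (Set.mem_Ici.2 (hα.le.trans hαβ)) hαβ⟩
  have hW : ContinuousOn W (Set.Icc α 1) :=
    (continuousOn_ternaryGF hα0 hα4).comp (by fun_prop) hmaps
  have hfactor : ∀ β ∈ Set.Icc α 1,
      (β * W β - 1) * (β * (1 - β) * W β ^ 2 + (1 - β) * W β - 1) = 0 := by
    intro β hβ
    have hcubic := ternaryGF_eq_one_add_mul_pow_three (hmaps hβ).1 ((hmaps hβ).2.trans_lt hα4)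
    linear_combination -hcubic
  have hroot := isPreconnected_Icc.eqOn_zero_of_mul_eq_zero (by fun_prop) (by fun_prop) hfactor
    (fun β ⟨hαβ, _⟩ hf hg ↦ by
      have : 2 - 3 * β = 0 := by linear_combination β * hg - (1 - β) * (β * W β + 2) * hf
      linarith)
    (Set.right_mem_Icc.2 hα1) (by simp [W, ternaryGF_zero]) α (Set.left_mem_Icc.2 hα1)
  exact eq_inv_of_mul_eq_one_right (by linarith)

lemma hasSum_two_mul_phi_mul_pow {α : ℝ} (hα : 2 / 3 < α) (hα1 : α < 1) (j : ℕ) :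
    HasSum (fun k ↦ 2 * phi k (j + 2) * α ^ (j + 1 + 2 * k) * ((1 - α) / 2) ^ (j + 1 + k))
      ((2 * j + 1)! / (j ! ^ 2 * (j + 2)) * (α * (1 - α)) ^ (j + 1) / 2 ^ j *
        (3 / (2 * j + 1) * α⁻¹ ^ (2 * j + 1) - 1 / (j + 1) * α⁻¹ ^ (2 * j + 2))) := by
  obtain ⟨ht0, ht⟩ := sq_mul_one_sub_mem_Ico hα hα1.le
  have h₁ := hasSum_raney_mul_pow ht0 ht (2 * j + 1)
  have h₂ := hasSum_raney_mul_pow ht0 ht (2 * j + 2)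
  rw [ternaryGF_sq_mul_one_sub hα hα1.le] at h₁ h₂
  have hpow : ∀ k : ℕ, 2 * 2 ^ k * α ^ (j + 1 + 2 * k) * ((1 - α) / 2) ^ (j + 1 + k) =
      (α * (1 - α)) ^ (j + 1) / 2 ^ j * (α ^ 2 * (1 - α)) ^ k := by
    intro k
    simp only [div_pow, mul_pow, pow_add, pow_succ, pow_mul]
    field_simp
  have hterm : (fun k ↦ 2 * phi k (j + 2) * α ^ (j + 1 + 2 * k) * ((1 - α) / 2) ^ (j + 1 + k)) =
      fun k ↦ (2 * j + 1)! / (j ! ^ 2 * (j + 2)) * (α * (1 - α)) ^ (j + 1) / 2 ^ j *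
        (3 / (2 * j + 1) * (raney (2 * j + 1) k * (α ^ 2 * (1 - α)) ^ k) -
          1 / (j + 1) * (raney (2 * j + 2) k * (α ^ 2 * (1 - α)) ^ k)) := by
    funext k
    rw [phi_eq_raney]
    linear_combination (2 * j + 1)! / (j ! ^ 2 * (j + 2)) *
      (3 / (2 * j + 1) * raney (2 * j + 1) k - 1 / (j + 1) * raney (2 * j + 2) k) * hpow k
  rw [hterm]
  exact ((h₁.mul_left _).sub (h₂.mul_left _)).mul_left _

theorem supercritical_pik_sums_to_pi
    (α : ℝ) (hα0 : 2 / 3 < α) (hα1 : α < 1) (i : ℕ) (hi : 1 ≤ i) :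
    HasSum
      (fun k : ℕ =>
        2 * phi k (i + 1) * α ^ (i + 2 * k) * ((1 - α) / 2) ^ (i + k))
      (2 / 4 ^ i *
        ((Nat.factorial (2 * i - 2) : ℝ) /
          ((Nat.factorial (i - 1) : ℝ) * (Nat.factorial (i + 1) : ℝ))) *
        (2 / α - 2) ^ i * ((3 * α - 2) * (i : ℝ) + 1)) := by
  obtain ⟨j, rfl⟩ : ∃ j, i = j + 1 := ⟨i - 1, by omega⟩
  convert hasSum_two_mul_phi_mul_pow hα0 hα1 j using 1
  have hα : α ≠ 0 := by linarith
  rw [show 2 * (j + 1) - 2 = 2 * j by omega, Nat.add_sub_cancel, show j + 1 + 1 = j + 2 by ring,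
    show (4 : ℝ) = 2 * 2 by norm_num, show 2 / α - 2 = 2 * ((1 - α) / α) by field_simp]
  simp only [pow_succ, mul_pow, div_pow, inv_pow]
  push_cast [factorial_succ]
  field_simp
  ring
end

section
/- Let α ∈ [0, 2/3) and for integers i ≥ 1 define p_i = (2/4^i)·((2i−2)!/((i−1)!·(i+1)!))·((1−3α/2)i + 1). Then Σ_{i≥1} p_i = 1 − α. -/
/-!
With `c n = centralBinom n / 4 ^ n` one has `c (i + 1) = (2i + 1) / (2i + 2) * c i`, and the
summand splits into two telescoping pieces:
`p (i + 1) = (1 - 3α/2) (c i - c (i + 1)) + (α/2) (c i / (i + 1) - c (i + 1) / (i + 2))`.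
Both `c i` and `c i / (i + 1)` decrease from `1` to `0`, since `c n ^ 2 * (n + 1) ≤ 1`,
so the series sums to `(1 - 3α/2) + α/2 = 1 - α`.
-/

open Filter Topology

theorem factorial_two_mul_div_factorial_mul_factorial_add_two (n : ℕ) :
    ((2 * n).factorial : ℝ) / (n.factorial * (n + 2).factorial)
      = n.centralBinom / ((n + 1) * (n + 2)) := by
  rw [Nat.centralBinom_eq_two_mul_choose, Nat.cast_choose ℝ (by omega : n ≤ 2 * n),
    show 2 * n - n = n by omega, Nat.factorial_succ, Nat.factorial_succ]
  push_cast
  field_simp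
  ring

theorem hasSum_sub_succ_of_antitone {f : ℕ → ℝ} {l : ℝ} (hf : Antitone f)
    (hl : Tendsto f atTop (𝓝 l)) : HasSum (fun n => f n - f (n + 1)) (f 0 - l) := by
  rw [hasSum_iff_tendsto_nat_of_nonneg fun n => sub_nonneg.2 (hf n.le_succ)]
  simp only [Finset.sum_range_sub']
  exact tendsto_const_nhds.sub hl

noncomputable def centralBinomDivFourPow (n : ℕ) : ℝ := (n.centralBinom : ℝ) / 4 ^ n

namespace centralBinomDivFourPow

local notation "c" => centralBinomDivFourPow

theorem zero : c 0 = 1 := by simp [centralBinomDivFourPow]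

theorem nonneg (n : ℕ) : 0 ≤ c n := by unfold centralBinomDivFourPow; positivity

theorem succ (n : ℕ) : c (n + 1) = (2 * n + 1) / (2 * n + 2) * c n := by
  have h : ((n : ℝ) + 1) * (n + 1).centralBinom = 2 * (2 * n + 1) * n.centralBinom := by
    exact_mod_cast Nat.succ_mul_centralBinom_succ n
  unfold centralBinomDivFourPow
  rw [pow_succ]
  field_simp
  linear_combination 2 * h

theorem sub_succ (n : ℕ) : c n - c (n + 1) = c n / (2 * (n + 1)) := by
  rw [succ]; field_simp; ring

theorem div_succ_sub_succ (n : ℕ) :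
    c n / (n + 1) - c (n + 1) / ((n + 1 : ℕ) + 1) = 3 * c n / (2 * (n + 1) * (n + 2)) := by
  rw [succ]; push_cast; field_simp; ring

theorem antitone : Antitone c := antitone_nat_of_succ_le fun n => by
  rw [← sub_nonneg, sub_succ]
  have := nonneg n
  positivity

theorem antitone_div_succ : Antitone fun n : ℕ => c n / (n + 1) :=
  antitone_nat_of_succ_le fun n => by
    rw [← sub_nonneg, div_succ_sub_succ]
    have := nonneg n
    positivity

theorem sq_mul_succ_le_one (n : ℕ) : c n ^ 2 * (n + 1) ≤ 1 := by
  induction n with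
  | zero => simp [zero]
  | succ n ih =>
    have key : ((2 * n + 1) / (2 * n + 2) : ℝ) ^ 2 * (n + 2) ≤ n + 1 := by
      rw [div_pow, div_mul_eq_mul_div, div_le_iff₀ (by positivity)]
      nlinarith [(n.cast_nonneg : (0 : ℝ) ≤ n)]
    calc c (n + 1) ^ 2 * ((n + 1 : ℕ) + 1)
        = ((2 * n + 1) / (2 * n + 2) : ℝ) ^ 2 * (n + 2) * c n ^ 2 := by
          rw [succ]; push_cast; ring
      _ ≤ (n + 1) * c n ^ 2 := by gcongr
      _ ≤ 1 := by linarith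

theorem tendsto_zero : Tendsto c atTop (𝓝 0) := by
  have hsqrt : Tendsto (fun n : ℕ => √(1 / ((n : ℝ) + 1))) atTop (𝓝 0) := by
    simpa using tendsto_one_div_add_atTop_nhds_zero_nat.sqrt
  refine tendsto_of_tendsto_of_tendsto_of_le_of_le tendsto_const_nhds hsqrt nonneg fun n => ?_
  rw [Real.le_sqrt (nonneg n) (by positivity), le_div_iff₀ (by positivity)]
  exact sq_mul_succ_le_one n

theorem hasSum_sub_succ : HasSum (fun n => c n - c (n + 1)) 1 := by
  simpa [zero] using hasSum_sub_succ_of_antitone antitone tendsto_zero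

theorem hasSum_div_succ_sub_succ :
    HasSum (fun n : ℕ => c n / (n + 1) - c (n + 1) / ((n + 1 : ℕ) + 1)) 1 := by
  have hl : Tendsto (fun n : ℕ => c n / (n + 1)) atTop (𝓝 0) := by
    simpa only [mul_one_div, mul_zero] using
      tendsto_zero.mul tendsto_one_div_add_atTop_nhds_zero_nat
  simpa [zero] using hasSum_sub_succ_of_antitone antitone_div_succ hl

end centralBinomDivFourPow

theorem subcritical_pi_sums_to_one_minus_alpha_general
    (α : ℝ)
    (p : ℕ → ℝ)
    (hp : ∀ i : ℕ, 1 ≤ i →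
      p i = 2 / 4 ^ i *
        ((Nat.factorial (2 * i - 2) : ℝ) /
          ((Nat.factorial (i - 1) : ℝ) * (Nat.factorial (i + 1) : ℝ))) *
        ((1 - 3 * α / 2) * (i : ℝ) + 1)) :
    HasSum (fun i : ℕ => p (i + 1)) (1 - α) := by
  have hsplit : ∀ i : ℕ, p (i + 1) =
      (1 - 3 * α / 2) * (centralBinomDivFourPow i - centralBinomDivFourPow (i + 1)) +
        α / 2 * (centralBinomDivFourPow i / (i + 1) -
          centralBinomDivFourPow (i + 1) / ((i + 1 : ℕ) + 1)) := by
    intro i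
    rw [hp (i + 1) (by omega), show 2 * (i + 1) - 2 = 2 * i by omega, Nat.add_sub_cancel,
      factorial_two_mul_div_factorial_mul_factorial_add_two,
      centralBinomDivFourPow.sub_succ, centralBinomDivFourPow.div_succ_sub_succ]
    unfold centralBinomDivFourPow
    push_cast
    field_simp
    ring
  rw [funext hsplit, show 1 - α = (1 - 3 * α / 2) * 1 + α / 2 * 1 by ring]
  exact (centralBinomDivFourPow.hasSum_sub_succ.mul_left _).add
    (centralBinomDivFourPow.hasSum_div_succ_sub_succ.mul_left _)

theorem subcritical_pi_sums_to_one_minus_alpha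
    (α : ℝ) (hα0 : 0 ≤ α) (hα1 : α < 2 / 3)
    (p : ℕ → ℝ)
    (hp : ∀ i : ℕ, 1 ≤ i →
      p i = 2 / 4 ^ i *
        ((Nat.factorial (2 * i - 2) : ℝ) /
          ((Nat.factorial (i - 1) : ℝ) * (Nat.factorial (i + 1) : ℝ))) *
        ((1 - 3 * α / 2) * (i : ℝ) + 1)) :
    HasSum (fun i : ℕ => p (i + 1)) (1 - α) :=
  subcritical_pi_sums_to_one_minus_alpha_general α p hp
end

section
/- Let α ∈ (2/3, 1), let p ∈ [0, 1], and for integers i ≥ 1 define p_i = (2/4^i)·((2i−2)!/((i−1)!·(i+1)!))·(2/α − 2)^i·((3α−2)i + 1). Then αp − (1/2)·Σ_{i≥1} i·p_i = αp − (1/2)(α − √α·√(3α−2)), and this quantity is strictly positive if and only if p > (1/2)(1 − √(3 − 2/α)). -/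
/-!
Put `x = (1 - α) / (2α) ∈ (0, 1/4)`, so that `2/α - 2 = 4x` and `1 - 4x = 3 - 2/α`. The factorial
quotient in `pᵢ` is `C_{i-1} / (i + 1)` with `C` the Catalan numbers, and the recurrence
`(n + 2) C_{n+1} = 2 (2n + 1) Cₙ` turns `(n + 1) p_{n+1}` into `2αx (Cₙxⁿ + aₙ - a_{n+1})` with
`aₙ = n Cₙ xⁿ`, so the series telescopes to `2αx G(x)`, where `G(x) = ∑ Cₙ xⁿ`. Segner's recurrence
gives `x G² + 1 = G` through the Cauchy product, and the two-term recurrence gives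
`(1 - 4x) ∑ n Cₙ xⁿ = 1 - (1 - 2x) G`; positivity of the left side selects the root
`2xG = 1 - √(1 - 4x)`. Hence `∑ i pᵢ = α (1 - √(3 - 2/α)) = α - √α √(3α - 2)`.
-/

open Nat

section CatalanGenFun

variable {x : ℝ}

lemma catalan_le_four_pow (n : ℕ) : catalan n ≤ 4 ^ n :=
  calc catalan n ≤ (n + 1) * catalan n := Nat.le_mul_of_pos_left _ n.succ_pos
    _ = n.centralBinom := succ_mul_catalan_eq_centralBinom n
    _ ≤ 4 ^ n := centralBinom_le_four_pow n

lemma add_two_mul_catalan_succ (n : ℕ) :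
    (n + 2) * catalan (n + 1) = 2 * (2 * n + 1) * catalan n := by
  have h := succ_mul_centralBinom_succ n
  rw [← succ_mul_catalan_eq_centralBinom, ← succ_mul_catalan_eq_centralBinom] at h
  apply Nat.eq_of_mul_eq_mul_left n.succ_pos
  linarith

lemma summable_norm_pow_mul_catalan_mul_pow (k : ℕ) (hx : |x| < 1 / 4) :
    Summable fun n : ℕ => ‖(n : ℝ) ^ k * catalan n * x ^ n‖ := by
  have h4x : ‖4 * |x|‖ < 1 := by
    rw [Real.norm_eq_abs, abs_of_nonneg (by positivity)]; linarith
  refine (summable_pow_mul_geometric_of_norm_lt_one k h4x).of_nonneg_of_le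
    (fun n => norm_nonneg _) fun n => ?_
  rw [norm_mul, norm_mul, norm_pow, norm_pow, Real.norm_natCast, Real.norm_natCast,
    Real.norm_eq_abs, mul_pow, mul_assoc]
  gcongr
  exact_mod_cast catalan_le_four_pow n

lemma summable_catalan_mul_pow (hx : |x| < 1 / 4) :
    Summable fun n : ℕ => (catalan n : ℝ) * x ^ n := by
  simpa using (summable_norm_pow_mul_catalan_mul_pow 0 hx).of_norm

lemma summable_natCast_mul_catalan_mul_pow (hx : |x| < 1 / 4) :
    Summable fun n : ℕ => (n : ℝ) * catalan n * x ^ n := by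
  simpa using (summable_norm_pow_mul_catalan_mul_pow 1 hx).of_norm

noncomputable def catalanGenFun (x : ℝ) : ℝ := ∑' n : ℕ, (catalan n : ℝ) * x ^ n

lemma mul_catalanGenFun_sq_add_one (hx : |x| < 1 / 4) :
    x * catalanGenFun x ^ 2 + 1 = catalanGenFun x := by
  have hnorm : Summable fun n : ℕ => ‖(catalan n : ℝ) * x ^ n‖ := by
    simpa using summable_norm_pow_mul_catalan_mul_pow 0 hx
  have hsq : catalanGenFun x ^ 2 = ∑' n : ℕ, (catalan (n + 1) : ℝ) * x ^ n := by
    rw [sq, catalanGenFun, tsum_mul_tsum_eq_tsum_sum_antidiagonal_of_summable_norm hnorm hnorm]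
    refine tsum_congr fun n => ?_
    rw [catalan_succ', Nat.cast_sum, Finset.sum_mul]
    refine Finset.sum_congr rfl fun ij hij => ?_
    rw [← Finset.HasAntidiagonal.mem_antidiagonal.1 hij, pow_add]
    push_cast
    ring
  rw [hsq, ← tsum_mul_left, catalanGenFun, hnorm.of_norm.tsum_eq_zero_add]
  simp only [catalan_zero, Nat.cast_one, pow_zero, mul_one, pow_succ]
  rw [add_comm]
  congr 1
  exact tsum_congr fun n => by ring

lemma one_sub_four_mul_tsum_natCast_mul_catalan_mul_pow (hx : |x| < 1 / 4) :
    (1 - 4 * x) * ∑' n : ℕ, (n : ℝ) * catalan n * x ^ n = 1 - (1 - 2 * x) * catalanGenFun x := by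
  unfold catalanGenFun
  set a : ℕ → ℝ := fun n => n * catalan n * x ^ n
  set t : ℕ → ℝ := fun n => catalan n * x ^ n
  have ha := (summable_natCast_mul_catalan_mul_pow hx).hasSum
  have ht := (summable_catalan_mul_pow hx).hasSum
  have hrec : (fun n => a (n + 1) + t (n + 1)) = fun n => 2 * x * (2 * a n + t n) := by
    funext n
    have h : ((n : ℝ) + 2) * catalan (n + 1) = 2 * (2 * n + 1) * catalan n := by
      exact_mod_cast add_two_mul_catalan_succ n
    simp only [a, t]
    push_cast
    linear_combination x ^ (n + 1) * h
  have hshift : HasSum (fun n => a (n + 1) + t (n + 1)) (∑' n, a n + (∑' n, t n - 1)) := by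
    simpa [a, t] using ((hasSum_nat_add_iff' 1).2 ha).add ((hasSum_nat_add_iff' 1).2 ht)
  have hrhs := ((ha.mul_left 2).add ht).mul_left (2 * x)
  rw [hrec] at hshift
  linear_combination hshift.unique hrhs

lemma two_mul_mul_catalanGenFun (hx0 : 0 ≤ x) (hx : x < 1 / 4) :
    2 * x * catalanGenFun x = 1 - √(1 - 4 * x) := by
  have hx' : |x| < 1 / 4 := by rwa [abs_of_nonneg hx0]
  have hquad := mul_catalanGenFun_sq_add_one hx'
  have hG : 0 ≤ catalanGenFun x := tsum_nonneg fun n => by positivity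
  have hA : 0 ≤ ∑' n : ℕ, (n : ℝ) * catalan n * x ^ n := tsum_nonneg fun n => by positivity
  have hN := one_sub_four_mul_tsum_natCast_mul_catalan_mul_pow hx'
  -- Of the two roots of `x G² - G + 1 = 0`, only the smaller one is compatible with `hN`.
  have hle : 2 * x * catalanGenFun x ≤ 1 := by
    nlinarith [mul_nonneg (by linarith : (0 : ℝ) ≤ 1 - 4 * x) hA,
      mul_nonneg (by linarith : (0 : ℝ) ≤ 1 - 4 * x) hG]
  have hroot : √(1 - 4 * x) = 1 - 2 * x * catalanGenFun x := by
    rw [← Real.sqrt_sq (by linarith : 0 ≤ 1 - 2 * x * catalanGenFun x)]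
    congr 1
    linear_combination -4 * x * hquad
  linarith

lemma tsum_succ_mul_catalan_mul_pow_sub (hx : |x| < 1 / 4) :
    ∑' n : ℕ, (((n : ℝ) + 1) * catalan n * x ^ n - ((n : ℝ) + 1) * catalan (n + 1) * x ^ (n + 1))
      = catalanGenFun x := by
  have ha := (summable_natCast_mul_catalan_mul_pow hx).hasSum
  have ht := (summable_catalan_mul_pow hx).hasSum
  have hshift := (hasSum_nat_add_iff' 1).2 ha
  simp only [Finset.range_one, Finset.sum_singleton, CharP.cast_eq_zero, zero_mul, sub_zero,
    Nat.cast_add, Nat.cast_one] at hshift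
  have hsucc : HasSum (fun n : ℕ => ((n : ℝ) + 1) * catalan n * x ^ n)
      (∑' n : ℕ, (n : ℝ) * catalan n * x ^ n + catalanGenFun x) :=
    (ha.add ht).congr_fun fun n => by ring
  rw [(hsucc.sub hshift).tsum_eq]
  ring

end CatalanGenFun

lemma factorial_two_mul_div_factorial_mul_factorial (n : ℕ) :
    ((2 * n)! : ℝ) / (n ! * (n + 2)!) = catalan n / (n + 2) := by
  have hB : (n.centralBinom : ℝ) = (2 * n)! / (n ! * n !) := by
    rw [centralBinom, Nat.cast_choose ℝ (by omega : n ≤ 2 * n), show 2 * n - n = n by omega]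
  have hC : ((n : ℝ) + 1) * catalan n = n.centralBinom := by
    exact_mod_cast succ_mul_catalan_eq_centralBinom n
  rw [hB] at hC
  rw [factorial_succ, factorial_succ]
  push_cast
  field_simp
  field_simp at hC
  linear_combination -((n : ℝ) + 2) * hC

noncomputable def peelingProb (α : ℝ) (i : ℕ) : ℝ :=
  2 / 4 ^ i * ((Nat.factorial (2 * i - 2) : ℝ) /
    ((Nat.factorial (i - 1) : ℝ) * (Nat.factorial (i + 1) : ℝ))) *
    (2 / α - 2) ^ i * ((3 * α - 2) * (i : ℝ) + 1)

lemma succ_mul_peelingProb_succ {α x : ℝ} (hx : 2 * α * x = 1 - α) (n : ℕ) :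
    ((n : ℝ) + 1) * peelingProb α (n + 1) =
      2 * α * x *
        (((n : ℝ) + 1) * catalan n * x ^ n - ((n : ℝ) + 1) * catalan (n + 1) * x ^ (n + 1)) := by
  have hα : α ≠ 0 := by rintro rfl; linarith
  have h4x : 2 / α - 2 = 4 * x := by field_simp; linarith
  have hC : (catalan (n + 1) : ℝ) = 2 * (2 * n + 1) * catalan n / (n + 2) := by
    rw [eq_div_iff (by positivity), mul_comm]
    exact_mod_cast add_two_mul_catalan_succ n
  rw [peelingProb, show 2 * (n + 1) - 2 = 2 * n by omega, Nat.add_sub_cancel,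
    factorial_two_mul_div_factorial_mul_factorial, h4x, mul_pow, hC]
  push_cast
  field_simp
  rw [pow_succ]
  linear_combination (catalan n : ℝ) * x ^ n * x * (2 * n + 1) * hx

lemma tsum_succ_mul_peelingProb_succ {α : ℝ} (hα0 : 2 / 3 < α) (hα1 : α < 1) :
    ∑' n : ℕ, ((n : ℝ) + 1) * peelingProb α (n + 1) = α * (1 - √(3 - 2 / α)) := by
  set x := (1 - α) / (2 * α) with hx
  have hαx : 2 * α * x = 1 - α := by rw [hx]; field_simp
  have hx0 : 0 ≤ x := div_nonneg (by linarith) (by linarith)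
  have hx4 : x < 1 / 4 := by rw [div_lt_iff₀ (by linarith)]; linarith
  have h4x : 1 - 4 * x = 3 - 2 / α := by field_simp; linarith
  rw [tsum_congr (succ_mul_peelingProb_succ hαx), tsum_mul_left,
    tsum_succ_mul_catalan_mul_pow_sub (by rwa [abs_of_nonneg hx0]), ← h4x,
    ← two_mul_mul_catalanGenFun hx0 hx4]
  ring

theorem percolation_expected_change_general
    (α : ℝ) (hα0 : 2 / 3 < α) (hα1 : α < 1)
    (q : ℝ)
    (p : ℕ → ℝ)
    (hp : ∀ i : ℕ, 1 ≤ i →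
      p i = 2 / 4 ^ i *
        ((Nat.factorial (2 * i - 2) : ℝ) /
          ((Nat.factorial (i - 1) : ℝ) * (Nat.factorial (i + 1) : ℝ))) *
        (2 / α - 2) ^ i * ((3 * α - 2) * (i : ℝ) + 1)) :
    α * q - (1 / 2) * (∑' i : ℕ, ((i : ℝ) + 1) * p (i + 1)) =
        α * q - (1 / 2) * (α - Real.sqrt α * Real.sqrt (3 * α - 2)) ∧
      (0 < α * q - (1 / 2) * (∑' i : ℕ, ((i : ℝ) + 1) * p (i + 1)) ↔
        q > (1 / 2) * (1 - Real.sqrt (3 - 2 / α))) := by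
  have hα : 0 < α := by linarith
  have hsum : ∑' i : ℕ, ((i : ℝ) + 1) * p (i + 1) = α * (1 - √(3 - 2 / α)) := by
    rw [← tsum_succ_mul_peelingProb_succ hα0 hα1]
    exact tsum_congr fun i => by rw [hp (i + 1) (by omega), peelingProb]
  have hroot : √α * √(3 * α - 2) = α * √(3 - 2 / α) := by
    rw [← Real.sqrt_mul hα.le, show α * (3 * α - 2) = α ^ 2 * (3 - 2 / α) by field_simp,
      Real.sqrt_mul (sq_nonneg α), Real.sqrt_sq hα.le]
  rw [hsum, hroot, show α * q - 1 / 2 * (α * (1 - √(3 - 2 / α)))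
    = α * (q - 1 / 2 * (1 - √(3 - 2 / α))) by ring, mul_pos_iff_of_pos_left hα, sub_pos]
  exact ⟨by ring, Iff.rfl⟩

theorem percolation_expected_change
    (α : ℝ) (hα0 : 2 / 3 < α) (hα1 : α < 1)
    (q : ℝ) (hq0 : 0 ≤ q) (hq1 : q ≤ 1)
    (p : ℕ → ℝ)
    (hp : ∀ i : ℕ, 1 ≤ i →
      p i = 2 / 4 ^ i *
        ((Nat.factorial (2 * i - 2) : ℝ) /
          ((Nat.factorial (i - 1) : ℝ) * (Nat.factorial (i + 1) : ℝ))) *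
        (2 / α - 2) ^ i * ((3 * α - 2) * (i : ℝ) + 1)) :
    α * q - (1 / 2) * (∑' i : ℕ, ((i : ℝ) + 1) * p (i + 1)) =
        α * q - (1 / 2) * (α - Real.sqrt α * Real.sqrt (3 * α - 2)) ∧
      (0 < α * q - (1 / 2) * (∑' i : ℕ, ((i : ℝ) + 1) * p (i + 1)) ↔
        q > (1 / 2) * (1 - Real.sqrt (3 - 2 / α))) :=
  percolation_expected_change_general α hα0 hα1 q p hp
end

section
/- Let X₁, X₂, … be an i.i.d. sequence of real random variables on a probability space such that E(X₁) > 0 and such that there exists ε > 0 with E(exp(λX₁)) < ∞ for all λ with |λ| < ε. Let Sₙ = X₁ + ⋯ + Xₙ. Then there exists a constant c > 0 such that for every k > 0, P(∃ n ≥ 1 with Sₙ ≤ −k) ≤ exp(−ck). -/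
/-!
Since `E X₁ > 0` is the derivative at `0` of the moment generating function, which equals `1`
there, some `t < 0` has `E exp (t X₁) < 1`. Then `exp (t Sₙ)` is a nonnegative supermartingale
starting below `1`, and Ville's maximal inequality (optional stopping at the first time it reaches
`exp (-t k)`) bounds the probability that it ever does, an event containing `Sₙ ≤ -k`,
by `exp (t k)`.
-/

open MeasureTheory ProbabilityTheory Filter Topology Finset Real

namespace MeasureTheory

variable {Ω : Type*} {m0 : MeasurableSpace Ω} {μ : Measure Ω} {𝒢 : Filtration ℕ m0}
  {f : ℕ → Ω → ℝ}

theorem Supermartingale.maximal_ineq [IsFiniteMeasure μ] (hsup : Supermartingale f 𝒢 μ)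
    (hnonneg : 0 ≤ f) (ε : ℝ) (n : ℕ) :
    ε * μ.real {ω | ∃ k ≤ n, ε ≤ f k ω} ≤ μ[f 0] := by
  set A := {ω | ∃ k ≤ n, ε ≤ f k ω}
  set τ : Ω → ℕ∞ := fun ω ↦ (hittingBtwn f {y | ε ≤ y} 0 n ω : ℕ)
  have hτ : IsStoppingTime 𝒢 τ :=
    hsup.stronglyAdapted.adapted.isStoppingTime_hittingBtwn measurableSet_Ici
  have hτn : ∀ ω, τ ω ≤ n := fun ω ↦ WithTop.coe_le_coe.2 (hittingBtwn_le ω)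
  have hA : MeasurableSet A := by
    simp only [A, Set.ofPred_exists]
    exact MeasurableSet.iUnion fun k ↦ (MeasurableSet.const (k ≤ n)).inter <|
      measurableSet_le measurable_const ((hsup.stronglyMeasurable k).measurable.mono (𝒢.le k) le_rfl)
  have hint : Integrable (stoppedValue f τ) μ :=
    integrable_stoppedValue ℕ hτ hsup.integrable hτn
  have hstop : μ[stoppedValue f τ] ≤ μ[f 0] := by
    have := hsup.neg.expected_stoppedValue_mono (isStoppingTime_const 𝒢 0) hτ
      (fun _ ↦ zero_le) hτn
    rw [stoppedValue_const] at this
    change ∫ ω, -f 0 ω ∂μ ≤ ∫ ω, -stoppedValue f τ ω ∂μ at this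
    rw [integral_neg, integral_neg] at this
    exact neg_le_neg_iff.1 this
  calc ε * μ.real A
      ≤ ∫ ω in A, stoppedValue f τ ω ∂μ := by
        refine setIntegral_ge_of_const_le_real hA (measure_ne_top _ _) (fun ω hω ↦ ?_)
          hint.integrableOn
        obtain ⟨k, hkn, hk⟩ := hω
        exact stoppedValue_hittingBtwn_mem ⟨k, ⟨zero_le, hkn⟩, hk⟩
    _ ≤ μ[stoppedValue f τ] := setIntegral_le_integral hint (.of_forall fun ω ↦ hnonneg _ _)
    _ ≤ μ[f 0] := hstop

theorem Supermartingale.measure_exists_ge_le [IsFiniteMeasure μ] (hsup : Supermartingale f 𝒢 μ)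
    (hnonneg : 0 ≤ f) {ε : ℝ} (hε : 0 < ε) :
    μ {ω | ∃ k, ε ≤ f k ω} ≤ ENNReal.ofReal (μ[f 0] / ε) := by
  have hmono : Monotone fun n ↦ {ω | ∃ k ≤ n, ε ≤ f k ω} := fun m n hmn ω ⟨k, hk, hkω⟩ ↦
    ⟨k, hk.trans hmn, hkω⟩
  have hunion : {ω | ∃ k, ε ≤ f k ω} = ⋃ n, {ω | ∃ k ≤ n, ε ≤ f k ω} := by
    ext ω
    simp only [Set.mem_ofPred_eq, Set.mem_iUnion]
    exact ⟨fun ⟨k, hk⟩ ↦ ⟨k, k, le_rfl, hk⟩, fun ⟨_, k, _, hk⟩ ↦ ⟨k, hk⟩⟩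
  rw [hunion, hmono.measure_iUnion]
  refine iSup_le fun n ↦ ?_
  rw [← ofReal_measureReal (measure_ne_top _ _)]
  exact ENNReal.ofReal_le_ofReal ((le_div_iff₀' hε).2 (hsup.maximal_ineq hnonneg ε n))

end MeasureTheory

namespace ProbabilityTheory

variable {Ω : Type*} {m0 : MeasurableSpace Ω} {μ : Measure Ω}

/-- The `n`-th term is `exp (t Sₙ₊₁)`, so that it is measurable for the natural filtration at
time `n`, which already contains `X n`. -/
theorem iIndepFun.supermartingale_exp_mul_sum {X : ℕ → Ω → ℝ}
    (hX : ∀ i, StronglyMeasurable (X i)) (hindep : iIndepFun X μ) {t : ℝ}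
    (hint : ∀ i, Integrable (fun ω ↦ exp (t * X i ω)) μ) (hmgf : ∀ i, mgf (X i) μ t ≤ 1) :
    Supermartingale (fun n ω ↦ exp (t * ∑ i ∈ range (n + 1), X i ω))
      (Filtration.natural X hX) μ := by
  have := hindep.isProbabilityMeasure
  set 𝒢 := Filtration.natural X hX
  set S : ℕ → Ω → ℝ := fun n ω ↦ exp (t * ∑ i ∈ range (n + 1), X i ω)
  set g : ℕ → Ω → ℝ := fun i ω ↦ exp (t * X i ω)
  have hadapted : StronglyAdapted 𝒢 S := fun n ↦ by
    have hsum : Measurable[𝒢 n] fun ω ↦ ∑ i ∈ range (n + 1), X i ω :=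
      Finset.measurable_sum _ fun i hi ↦
        ((Filtration.stronglyAdapted_natural hX i).mono
          (𝒢.mono (Nat.lt_succ_iff.1 (mem_range.1 hi)))).measurable
    exact (hsum.const_mul t).exp.stronglyMeasurable
  have hintS : ∀ n, Integrable (S n) μ := fun n ↦ by
    simpa [S, Finset.sum_apply] using
      hindep.integrable_exp_mul_sum (fun i ↦ (hX i).measurable) fun i _ ↦ hint i
  refine supermartingale_nat hadapted hintS fun n ↦ ?_
  have hstep : S (n + 1) = S n * g (n + 1) := by
    funext ω
    simp only [S, g, Pi.mul_apply, sum_range_succ _ (n + 1), mul_add, exp_add]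
  have hpull : μ[S n * g (n + 1) | 𝒢 n] =ᵐ[μ] S n * μ[g (n + 1) | 𝒢 n] :=
    condExp_mul_of_stronglyMeasurable_left (hadapted n) (hstep ▸ hintS (n + 1)) (hint (n + 1))
  have hindep_step : μ[g (n + 1) | 𝒢 n] =ᵐ[μ] fun _ ↦ mgf (X (n + 1)) μ t :=
    condExp_indep_eq (hX (n + 1)).measurable.comap_le (𝒢.le n)
      ((measurable_const_mul t).exp.comp (comap_measurable (X (n + 1)))).stronglyMeasurable
      (hindep.indep_comap_natural_of_lt hX n.lt_succ_self)
  filter_upwards [hpull, hindep_step] with ω hω₁ hω₂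
  rw [hstep, hω₁, Pi.mul_apply, hω₂]
  exact mul_le_of_le_one_right (exp_nonneg _) (hmgf _)

theorem exists_neg_mgf_lt_one [IsProbabilityMeasure μ] {Y : Ω → ℝ}
    (h0 : 0 ∈ interior (integrableExpSet Y μ)) (hmean : 0 < μ[Y]) :
    ∃ t < 0, t ∈ integrableExpSet Y μ ∧ mgf Y μ t < 1 := by
  have hderiv : HasDerivAt (mgf Y μ) μ[Y] 0 := by simpa using hasDerivAt_mgf h0
  have hslope : ∀ᶠ t in 𝓝[<] 0, 0 < slope (mgf Y μ) 0 t :=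
    (hasDerivAt_iff_tendsto_slope.1 hderiv |>.eventually (eventually_gt_nhds hmean)).filter_mono
      (nhdsLT_le_nhdsNE 0)
  have hmem : ∀ᶠ t in 𝓝[<] 0, t ∈ integrableExpSet Y μ ∧ t < 0 :=
    Eventually.and (nhdsWithin_le_nhds (mem_interior_iff_mem_nhds.1 h0)) self_mem_nhdsWithin
  obtain ⟨t, hpos, hint, hneg⟩ := (hslope.and hmem).exists
  exact ⟨t, hneg, hint, by simpa using (slope_pos_iff_gt hneg).1 hpos⟩

end ProbabilityTheory

theorem positive_drift_large_deviation
    {Ω : Type*} [MeasurableSpace Ω] (P : Measure Ω) [IsProbabilityMeasure P]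
    (X : ℕ → Ω → ℝ) (hmeas : ∀ n, Measurable (X n))
    (hindep : iIndepFun X P)
    (hident : ∀ n, IdentDistrib (X n) (X 0) P P)
    (hmean : 0 < ∫ ω, X 0 ω ∂P)
    (hmgf : ∃ ε > (0 : ℝ), ∀ t : ℝ, |t| < ε →
      Integrable (fun ω => Real.exp (t * X 0 ω)) P) :
    ∃ c > (0 : ℝ), ∀ k : ℝ, 0 < k →
      P {ω | ∃ n : ℕ, 1 ≤ n ∧ (∑ i ∈ Finset.range n, X i ω) ≤ -k} ≤
        ENNReal.ofReal (Real.exp (-c * k)) := by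
  obtain ⟨ε, hε, hint⟩ := hmgf
  have h0 : 0 ∈ interior (integrableExpSet (X 0) P) :=
    mem_interior.2 ⟨Metric.ball 0 ε, fun t ht ↦ hint t (by simpa using ht), Metric.isOpen_ball,
      Metric.mem_ball_self hε⟩
  obtain ⟨t, ht, hint_t, hmgf_t⟩ := exists_neg_mgf_lt_one h0 hmean
  have hsup := hindep.supermartingale_exp_mul_sum (fun i ↦ (hmeas i).stronglyMeasurable)
    (fun i ↦ ((hident i).comp (measurable_const_mul t).exp).integrable_iff.2 hint_t)
    (fun i ↦ (mgf_congr_of_identDistrib _ _ (hident i) t).trans_le hmgf_t.le)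
  refine ⟨-t, neg_pos.2 ht, fun k _ ↦ ?_⟩
  have hsub : {ω | ∃ n : ℕ, 1 ≤ n ∧ (∑ i ∈ Finset.range n, X i ω) ≤ -k} ⊆
      {ω | ∃ n, exp (-t * k) ≤ exp (t * ∑ i ∈ Finset.range (n + 1), X i ω)} := by
    rintro ω ⟨n, hn, hSn⟩
    obtain ⟨m, rfl⟩ := Nat.exists_eq_add_of_le' hn
    exact ⟨m, exp_le_exp.2 (by nlinarith)⟩
  calc P _ ≤ P {ω | ∃ n, exp (-t * k) ≤ exp (t * ∑ i ∈ Finset.range (n + 1), X i ω)} :=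
        measure_mono hsub
    _ ≤ ENNReal.ofReal (mgf (X 0) P t / exp (-t * k)) := by
        simpa [mgf] using hsup.measure_exists_ge_le (fun _ _ ↦ (exp_pos _).le) (exp_pos (-t * k))
    _ ≤ ENNReal.ofReal (exp (- -t * k)) := by
        gcongr
        rw [div_le_iff₀ (exp_pos _), ← exp_add, neg_mul, neg_add_cancel, exp_zero]
        exact hmgf_t.le
end

section
/- Let W be a real-valued random variable on a probability space and let c > 0 be such that √x · P(W > x) → c as x → ∞. For each integer n ≥ 1 define aₙ = inf{ t ∈ ℝ : P(W > t) ≤ 1/n }. Then aₙ / n² → c² as n → ∞. -/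
open Filter MeasureTheory

theorem quantile_asymptotics_of_sqrt_tail
    {Ω : Type*} [MeasurableSpace Ω] (P : Measure Ω) [IsProbabilityMeasure P]
    (W : Ω → ℝ) (c : ℝ) (hc : 0 < c)
    (htail : Tendsto (fun x : ℝ => Real.sqrt x * (P {ω | x < W ω}).toReal)
      atTop (nhds c))
    (a : ℕ → ℝ)
    (ha : ∀ n : ℕ, 1 ≤ n →
      a n = sInf {t : ℝ | (P {ω | t < W ω}).toReal ≤ 1 / (n : ℝ)}) :
    Tendsto (fun n : ℕ => a n / (n : ℝ) ^ 2) atTop (nhds (c ^ 2)) := by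
  set F : ℝ → ℝ := fun x => (P {ω | x < W ω}).toReal with hF
  have hFanti : Antitone F := by
    intro s t hst
    exact ENNReal.toReal_mono (measure_ne_top P _)
      (measure_mono (fun ω hω => lt_of_le_of_lt hst hω))
  rw [Metric.tendsto_atTop]
  intro ε hε
  set d : ℝ := min (c/2) (ε/(3*c)) with hd
  have hd0 : 0 < d := lt_min (by linarith) (by positivity)
  have hdc : d ≤ c/2 := min_le_left _ _
  have hdε : d ≤ ε/(3*c) := min_le_right _ _
  obtain ⟨X₁, hX₁⟩ := (Metric.tendsto_atTop.mp htail) d hd0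
  set X₀ : ℝ := max X₁ 1 with hX₀def
  have hX₀1 : (1:ℝ) ≤ X₀ := le_max_right _ _
  have key : ∀ x, X₀ ≤ x →
      c - d < Real.sqrt x * F x ∧ Real.sqrt x * F x < c + d := by
    intro x hx
    have h := hX₁ x (le_trans (le_max_left _ _) hx)
    rw [Real.dist_eq, abs_lt] at h
    constructor <;> linarith [h.1, h.2]
  have hFX₀ : 0 < F X₀ := by
    have h := (key X₀ le_rfl).1
    by_contra h0
    push_neg at h0
    have hs1 : Real.sqrt 1 ≤ Real.sqrt X₀ := Real.sqrt_le_sqrt hX₀1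
    rw [Real.sqrt_one] at hs1
    nlinarith [Real.sqrt_nonneg X₀]
  obtain ⟨n₁, hn₁⟩ := exists_nat_gt (1 / F X₀)
  obtain ⟨n₂, hn₂⟩ := exists_nat_gt (X₀ / (c+d)^2)
  refine ⟨max (max n₁ n₂) 1, fun n hn => ?_⟩
  have hn1 : 1 ≤ n := le_trans (le_max_right _ _) hn
  have hnn₁ : (n₁:ℝ) ≤ (n:ℝ) := by
    exact_mod_cast le_trans (le_trans (le_max_left _ _) (le_max_left _ _)) hn
  have hnn₂ : (n₂:ℝ) ≤ (n:ℝ) := by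
    exact_mod_cast le_trans (le_trans (le_max_right _ _) (le_max_left _ _)) hn
  have hnpos : (0:ℝ) < (n:ℝ) := by exact_mod_cast hn1
  have hn1' : (1:ℝ) ≤ (n:ℝ) := by exact_mod_cast hn1
  -- 1/n < F X₀
  have hinv : 1 / (n:ℝ) < F X₀ := by
    rw [div_lt_iff₀ hnpos]
    have : 1 / F X₀ < (n:ℝ) := lt_of_lt_of_le hn₁ hnn₁
    rw [div_lt_iff₀ hFX₀] at this
    linarith
  set S : Set ℝ := {t : ℝ | F t ≤ 1 / (n : ℝ)} with hS
  have hcd : 0 < c + d := by linarith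
  have hcd' : 0 < c - d := by linarith
  -- the candidate upper point
  have htX₀ : X₀ ≤ (c+d)^2 * (n:ℝ)^2 := by
    have h1 : X₀ ≤ (c+d)^2 * (n:ℝ) := by
      have := lt_of_lt_of_le hn₂ hnn₂
      rw [div_lt_iff₀ (by positivity)] at this
      nlinarith
    nlinarith
  have hmem : (c+d)^2 * (n:ℝ)^2 ∈ S := by
    have hsq : Real.sqrt ((c+d)^2 * (n:ℝ)^2) = (c+d) * (n:ℝ) := by
      rw [show (c+d)^2 * (n:ℝ)^2 = ((c+d)*(n:ℝ))^2 by ring,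
        Real.sqrt_sq (by positivity)]
    have h := (key _ htX₀).2
    rw [hsq] at h
    have hFnn : 0 ≤ F ((c+d)^2 * (n:ℝ)^2) := ENNReal.toReal_nonneg
    show F ((c+d)^2 * (n:ℝ)^2) ≤ 1 / (n:ℝ)
    rw [le_div_iff₀ hnpos]
    nlinarith
  have hlow : ∀ t ∈ S, (c-d)^2 * (n:ℝ)^2 ≤ t := by
    intro t ht
    by_contra hlt
    push_neg at hlt
    have htS : F t ≤ 1 / (n:ℝ) := ht
    rcases lt_or_ge t X₀ with hcase | hcase
    · have : F X₀ ≤ F t := hFanti hcase.le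
      linarith
    · have h := (key t hcase).1
      have ht1 : (1:ℝ) ≤ t := le_trans hX₀1 hcase
      have hsqt : Real.sqrt t < (c-d) * (n:ℝ) := by
        have : Real.sqrt t < Real.sqrt ((c-d)^2 * (n:ℝ)^2) := by
          apply (Real.sqrt_lt_sqrt (by linarith) hlt)
        rwa [show (c-d)^2 * (n:ℝ)^2 = ((c-d)*(n:ℝ))^2 by ring,
          Real.sqrt_sq (by positivity)] at this
      have hsqt0 : (1:ℝ) ≤ Real.sqrt t := by
        rw [show (1:ℝ) = Real.sqrt 1 by rw [Real.sqrt_one]]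
        exact Real.sqrt_le_sqrt ht1
      -- F t > (c-d)/√t > 1/n
      have h1 : (c - d) < Real.sqrt t * F t := h
      have h2 : Real.sqrt t * F t ≤ Real.sqrt t * (1 / (n:ℝ)) := by
        apply mul_le_mul_of_nonneg_left htS (by linarith)
      have h3 : Real.sqrt t * (1/(n:ℝ)) < (c-d) := by
        rw [mul_one_div, div_lt_iff₀ hnpos]
        exact hsqt
      linarith
  have hbdd : BddBelow S := ⟨(c-d)^2 * (n:ℝ)^2, hlow⟩
  have hne : S.Nonempty := ⟨_, hmem⟩
  have haeq : a n = sInf S := ha n hn1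
  have hub : a n ≤ (c+d)^2 * (n:ℝ)^2 := haeq ▸ csInf_le hbdd hmem
  have hlb : (c-d)^2 * (n:ℝ)^2 ≤ a n := haeq ▸ le_csInf hne hlow
  rw [Real.dist_eq, abs_lt]
  have hn2pos : (0:ℝ) < (n:ℝ)^2 := by positivity
  have hq1 : (c-d)^2 ≤ a n / (n:ℝ)^2 := (le_div_iff₀ hn2pos).2 (by linarith)
  have hq2 : a n / (n:ℝ)^2 ≤ (c+d)^2 := (div_le_iff₀ hn2pos).2 (by linarith)
  have hεd : 3 * c * d ≤ ε := by
    have h := (le_div_iff₀ (by positivity : (0:ℝ) < 3*c)).1 hdε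
    linarith
  have hdd : d*d ≤ (c/2)*d := mul_le_mul_of_nonneg_right hdc hd0.le
  have hdd0 : 0 ≤ d*d := mul_nonneg hd0.le hd0.le
  have hcd0 : 0 < c*d := mul_pos hc hd0
  have e1 : (c-d)^2 = c^2 - 2*(c*d) + d*d := by ring
  have e2 : (c+d)^2 = c^2 + 2*(c*d) + d*d := by ring
  constructor
  · linarith
  · linarith
end

section
/- There exists a constant C > 0 such that for all integers k ≥ 1 and l ≥ 2: φ_{k,l} ≤ C · (27/2)^k · 9^l · (1 + 2l/(3k))^{2l+3k} · k^{−5/2} · √l. -/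
/-! Writing `l = a + 2`, the formula reads
`φ_{k,l} = 2^(k+1) (2a+1) C(2a,a) C(2a+3k,k) / ((2a+2k+1)(2a+2k+2))`.
The central factor obeys `C(2a,a)^2 (3a+1) ≤ 16^a`, so `(2a+1) C(2a,a) ≤ √2 4^a √l`.
Stirling's bounds `√(2πn) (n/e)^n ≤ n! ≤ e √n (n/e)^n` give
`C(k+c,k) ≤ √((k+c)/(kc)) (k+c)^(k+c) / (k^k c^c)`, applied with `c = 2k+2l` after enlarging
`2a+3k` to `3k+2l`. Since `(27/2)^k 9^l (1 + 2l/(3k))^(3k+2l) = (3k+2l)^(3k+2l) / (2^k k^(3k+2l))`,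
what remains is to compare powers of `k` with powers of `k + l`; the constant `C = 1/4` suffices. -/

open Real Nat

theorem factorial_le_exp_one_mul_sqrt_mul_pow {n : ℕ} (hn : n ≠ 0) :
    (n ! : ℝ) ≤ exp 1 * √n * (n / exp 1) ^ n := by
  obtain ⟨m, rfl⟩ := Nat.exists_eq_succ_of_ne_zero hn
  have h : Stirling.stirlingSeq (m + 1) ≤ Stirling.stirlingSeq 1 :=
    Stirling.stirlingSeq'_antitone (Nat.zero_le m)
  rw [Stirling.stirlingSeq_one, Stirling.stirlingSeq, div_le_iff₀ (by positivity)] at h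
  refine h.trans_eq ?_
  rw [sqrt_mul zero_le_two]
  field_simp

theorem choose_mul_sqrt_mul_pow_le (k c : ℕ) :
    ((k + c).choose k : ℝ) * (√k * √c * k ^ k * c ^ c) ≤ √(k + c) * (k + c) ^ (k + c) := by
  obtain ⟨rfl, rfl⟩ | hkc : k = 0 ∧ c = 0 ∨ k + c ≠ 0 := by omega
  · simp
  have hfact : ((k + c).choose k : ℝ) * k ! * c ! = (k + c)! := by
    have := Nat.choose_mul_factorial_mul_factorial (Nat.le_add_right k c)
    rw [Nat.add_sub_cancel_left] at this
    exact_mod_cast this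
  set E := exp 1
  -- The powers of `E` cancel, and the constant `E / (2π) ≤ 1` is absorbed.
  have hstirling : ((k + c).choose k : ℝ) * (√(2 * π * k) * (k / E) ^ k) *
      (√(2 * π * c) * (c / E) ^ c) ≤ E * √(k + c) * ((k + c) / E) ^ (k + c) :=
    calc _ ≤ ((k + c).choose k : ℝ) * k ! * c ! := by
          gcongr <;> exact Stirling.le_factorial_stirling _
      _ = (k + c)! := hfact
      _ ≤ _ := mod_cast factorial_le_exp_one_mul_sqrt_mul_pow hkc
  have hlhs : ((k + c).choose k : ℝ) * (√(2 * π * k) * (k / E) ^ k) *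
      (√(2 * π * c) * (c / E) ^ c) =
      2 * π / E ^ (k + c) * (((k + c).choose k : ℝ) * (√k * √c * k ^ k * c ^ c)) := by
    rw [sqrt_mul (by positivity) k, sqrt_mul (by positivity) c, div_pow, div_pow, pow_add]
    field_simp
    rw [sq_sqrt (by positivity)]
    ring
  have hrhs : E * √(k + c) * ((k + c) / E) ^ (k + c) =
      E / E ^ (k + c) * (√(k + c) * (k + c) ^ (k + c)) := by
    rw [div_pow]; ring
  rw [hlhs, hrhs] at hstirling
  refine le_of_mul_le_mul_left (hstirling.trans ?_) (by positivity : 0 < 2 * π / E ^ (k + c))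
  have : E ≤ 2 * π := by linarith [exp_one_lt_d9, pi_gt_three]
  gcongr

theorem centralBinom_sq_mul_le (n : ℕ) : centralBinom n ^ 2 * (3 * n + 1) ≤ 16 ^ n := by
  induction n with
  | zero => simp
  | succ n ih =>
    have key : (n + 1) ^ 2 * (centralBinom (n + 1) ^ 2 * (3 * (n + 1) + 1)) ≤
        (n + 1) ^ 2 * 16 ^ (n + 1) :=
      calc (n + 1) ^ 2 * (centralBinom (n + 1) ^ 2 * (3 * (n + 1) + 1))
          = ((n + 1) * centralBinom (n + 1)) ^ 2 * (3 * n + 4) := by ring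
        _ = 4 * (2 * n + 1) ^ 2 * (3 * n + 4) * centralBinom n ^ 2 := by
          rw [Nat.succ_mul_centralBinom_succ]; ring
        _ ≤ 16 * (n + 1) ^ 2 * (centralBinom n ^ 2 * (3 * n + 1)) := by
          nlinarith [Nat.zero_le (centralBinom n ^ 2)]
        _ ≤ 16 * (n + 1) ^ 2 * 16 ^ n := by gcongr
        _ = (n + 1) ^ 2 * 16 ^ (n + 1) := by ring
    exact Nat.le_of_mul_le_mul_left key (by positivity)

theorem two_mul_add_one_mul_centralBinom_le (a : ℕ) :
    ((2 * a + 1) * centralBinom a : ℝ) ≤ √2 * 4 ^ a * √(a + 2) := by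
  have hsq : (2 * a + 1) ^ 2 * centralBinom a ^ 2 ≤ 2 * (a + 2) * 16 ^ a := by
    nlinarith [centralBinom_sq_mul_le a, Nat.zero_le (centralBinom a ^ 2)]
  calc ((2 * a + 1) * centralBinom a : ℝ) = √(((2 * a + 1) * centralBinom a) ^ 2) :=
        (sqrt_sq (by positivity)).symm
    _ ≤ √(2 * (a + 2) * (4 ^ a) ^ 2) := by
        gcongr
        rw [mul_pow, ← pow_mul, mul_comm a 2, pow_mul]
        exact_mod_cast hsq
    _ = √2 * 4 ^ a * √(a + 2) := by
        rw [sqrt_mul (by positivity), sqrt_sq (by positivity), sqrt_mul zero_le_two]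
        ring

theorem phi_add_two (k a : ℕ) :
    phi k (a + 2) = 2 ^ (k + 1) * ((2 * a + 1) * centralBinom a) * (2 * a + 3 * k).choose k /
      ((2 * a + 2 * k + 1) * (2 * a + 2 * k + 2)) := by
  have hcentral : ((2 * a + 1)! : ℝ) = (2 * a + 1) * centralBinom a * a ! * a ! := by
    rw [Nat.factorial_succ, centralBinom, two_mul, ← Nat.add_choose_mul_factorial_mul_factorial]
    push_cast; ring
  have hchoose : ((2 * a + 3 * k)! : ℝ) = (2 * a + 3 * k).choose k * k ! * (2 * a + 2 * k)! := by
    rw [show 2 * a + 3 * k = 2 * a + 2 * k + k by ring,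
      ← Nat.add_choose_mul_factorial_mul_factorial (2 * a + 2 * k) k]
    push_cast; ring
  have hsucc : ((2 * a + 2 * k + 2)! : ℝ) =
      (2 * a + 2 * k + 1) * (2 * a + 2 * k + 2) * (2 * a + 2 * k)! := by
    rw [Nat.factorial_succ, Nat.factorial_succ]
    push_cast; ring
  rw [phi, Nat.add_sub_cancel, hcentral, hchoose, hsucc]
  field_simp

theorem pow_mul_pow_mul_one_add_pow_eq {k : ℕ} (hk : k ≠ 0) (l : ℕ) :
    (27 / 2 : ℝ) ^ k * 9 ^ l * (1 + 2 * l / (3 * k)) ^ (2 * l + 3 * k) =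
      (3 * k + 2 * l) ^ (2 * l + 3 * k) / (2 ^ k * k ^ (2 * l + 3 * k)) := by
  have hk' : (k : ℝ) ≠ 0 := by exact_mod_cast hk
  have h3 : (3 : ℝ) ^ (2 * l + 3 * k) = 27 ^ k * 9 ^ l := by
    rw [pow_add, pow_mul, pow_mul]; norm_num; ring
  rw [one_add_div (by positivity), div_pow, div_pow, mul_pow, h3]
  field_simp

theorem rpow_five_div_two_eq_sq_mul_sqrt {x : ℝ} (hx : 0 ≤ x) :
    x ^ (5 / 2 : ℝ) = x ^ 2 * √x := by
  rw [sqrt_eq_rpow, ← rpow_natCast, ← rpow_add' hx (by norm_num)]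
  norm_num

theorem phi_add_two_le {k : ℕ} (hk : k ≠ 0) (a : ℕ) :
    phi k (a + 2) ≤ 2 ^ (k + 1) * (√2 * 4 ^ a * √(a + 2)) *
      (√(3 * k + 2 * (a + 2)) * (3 * k + 2 * (a + 2)) ^ (2 * (a + 2) + 3 * k) /
        (√k * √(2 * (k + (a + 2))) * k ^ k * (2 * (k + (a + 2))) ^ (2 * k + 2 * (a + 2)))) /
      (k + (a + 2)) ^ 2 := by
  have hY := choose_mul_sqrt_mul_pow_le k (2 * k + 2 * (a + 2))
  push_cast at hY
  rw [show k + (2 * k + 2 * (a + 2)) = 2 * (a + 2) + 3 * k by ring,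
    show (k : ℝ) + (2 * k + 2 * (a + 2)) = 3 * k + 2 * (a + 2) by ring,
    show (2 * k + 2 * (a + 2) : ℝ) = 2 * (k + (a + 2)) by ring] at hY
  have hK : (1 : ℝ) ≤ k := by exact_mod_cast Nat.one_le_iff_ne_zero.mpr hk
  rw [phi_add_two]
  gcongr ?_ * ?_ * ?_ / ?_
  · exact two_mul_add_one_mul_centralBinom_le a
  · rw [le_div_iff₀ (by positivity)]
    refine le_trans ?_ hY
    gcongr
    omega
  · nlinarith [(a.cast_nonneg : (0 : ℝ) ≤ a)]

theorem phi_le_pow_div_mul_sqrt {k l : ℕ} (hk : k ≠ 0) (hl : 2 ≤ l) :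
    phi k l ≤ (3 * k + 2 * l) ^ (2 * l + 3 * k) / (2 ^ k * k ^ (2 * l + 3 * k)) *
      (k ^ 2 * √k)⁻¹ * √l / 4 := by
  obtain ⟨a, rfl⟩ : ∃ a, l = a + 2 := ⟨l - 2, by omega⟩
  refine (phi_add_two_le hk a).trans ?_
  push_cast
  set n := 2 * (a + 2) + 3 * k
  set q := 2 * k + 2 * (a + 2) with hq
  set L : ℝ := a + 2
  set S : ℝ := 3 * k + 2 * L with hS
  set Q : ℝ := 2 * (k + L) with hQ
  have hQq : Q ^ q = 2 ^ (k + 1) * 4 ^ a * 2 ^ k * 8 * (k + L) ^ q := by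
    rw [hQ, mul_pow, hq, show (4 : ℝ) ^ a = 2 ^ (2 * a) by rw [pow_mul]; norm_num]
    ring
  have hkn : (k : ℝ) ^ n = k ^ k * k ^ q := by rw [← pow_add]; congr 1; omega
  have hL0 : 0 ≤ L := by positivity
  have hsqrt : √2 * √S ≤ 2 * √Q := by
    rw [← sqrt_mul zero_le_two, show 2 * √Q = √(2 ^ 2 * Q) by simp [sqrt_mul]]
    apply Real.sqrt_le_sqrt
    linarith
  have hkL : (k : ℝ) ≤ k + L := le_add_of_nonneg_right hL0
  calc _ = √2 * √S * (k ^ q * k ^ 2) / (√Q * ((k + L) ^ q * (k + L) ^ 2)) *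
        (S ^ n * √L / (8 * 2 ^ k * k ^ k * k ^ q * k ^ 2 * √k)) := by
        rw [hQq]; field_simp
    _ ≤ 2 * (S ^ n * √L / (8 * 2 ^ k * k ^ k * k ^ q * k ^ 2 * √k)) := by
      gcongr
      rw [div_le_iff₀ (by positivity)]
      calc √2 * √S * (k ^ q * k ^ 2) ≤ 2 * √Q * ((k + L) ^ q * (k + L) ^ 2) := by gcongr
        _ = _ := by ring
    _ = _ := by rw [hkn]; field_simp; ring

theorem phi_upper_bound :
    ∃ C : ℝ, 0 < C ∧ ∀ k : ℕ, 1 ≤ k → ∀ l : ℕ, 2 ≤ l →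
      phi k l ≤
        C * (27 / 2 : ℝ) ^ k * (9 : ℝ) ^ l *
          (1 + 2 * (l : ℝ) / (3 * (k : ℝ))) ^ (2 * l + 3 * k) *
          ((k : ℝ) ^ ((5 : ℝ) / 2))⁻¹ * Real.sqrt l := by
  refine ⟨1 / 4, by norm_num, fun k hk l hl => ?_⟩
  refine (phi_le_pow_div_mul_sqrt (by omega) hl).trans_eq ?_
  rw [rpow_five_div_two_eq_sq_mul_sqrt k.cast_nonneg]
  linear_combination
    -(((k : ℝ) ^ 2 * √k)⁻¹ * √l / 4) * pow_mul_pow_mul_one_add_pow_eq (by omega : k ≠ 0) l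
end
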